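/- Let X, X', J be finite types, set I := X × X', and let (M_t, M_f) be a binary measurement on ℂ^X. Let E_T, E_F : Matrix I I ℂ → Matrix I I ℂ be arbitrary functions, let F : Matrix J J ℂ → Matrix J J ℂ be linear, and let A_T, A_F, B be expectations on I × J. Write M_{t,1} := (M_t ⊗ 1_{X'}) ⊗ 1_J and M_{f,1} := (M_f ⊗ 1_{X'}) ⊗ 1_J on I × J. If qRHL(A_T, E_T, F, B) and qRHL(A_F, E_F, F, B) hold, then qRHL(M_{t,1}ᴴ * A_T * M_{t,1} + M_{f,1}ᴴ * A_F * M_{f,1}, ρ ↦ E_T((M_t ⊗ 1_{X'}) * ρ * (M_t ⊗ 1_{X'})ᴴ) + E_F((M_f ⊗ 1_{X'}) * ρ * (M_f ⊗ 1_{X'})ᴴ), F, B) holds. [Rule If1] -/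
import Mathlib


open Matrix Kronecker ComplexOrder

noncomputable section

/-- Partial trace over the second factor: `tr₂(ρ) i i' = ∑ j, ρ (i,j) (i',j)`. -/
def trB {I J : Type*} [Fintype J] (ρ : Matrix (I × J) (I × J) ℂ) : Matrix I I ℂ :=
  Matrix.of fun i i' => ∑ j, ρ (i, j) (i', j)

/-- Partial trace over the first factor: `tr₁(ρ) j j' = ∑ i, ρ (i,j) (i,j')`. -/
def trA {I J : Type*} [Fintype I] (ρ : Matrix (I × J) (I × J) ℂ) : Matrix J J ℂ :=
  Matrix.of fun j j' => ∑ i, ρ (i, j) (i, j')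

/-- `ρ` is separable iff it is a finite sum of Kronecker products of
positive semidefinite matrices. -/
def Separable {I J : Type*} [Fintype I] [Fintype J]
    (ρ : Matrix (I × J) (I × J) ℂ) : Prop :=
  ∃ (n : ℕ) (σ : Fin n → Matrix I I ℂ) (τ : Fin n → Matrix J J ℂ),
    (∀ k, (σ k).PosSemidef) ∧ (∀ k, (τ k).PosSemidef) ∧ ρ = ∑ k, σ k ⊗ₖ τ k

/-- The expectation-qRHL judgment `qRHL(A, E1, E2, B)`. -/
def qRHL {I J : Type*} [Fintype I] [Fintype J]
    (A : Matrix (I × J) (I × J) ℂ)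
    (E1 : Matrix I I ℂ → Matrix I I ℂ) (E2 : Matrix J J ℂ → Matrix J J ℂ)
    (B : Matrix (I × J) (I × J) ℂ) : Prop :=
  ∀ ρ : Matrix (I × J) (I × J) ℂ, ρ.PosSemidef → Separable ρ →
    ∃ ρ' : Matrix (I × J) (I × J) ℂ, ρ'.PosSemidef ∧ Separable ρ' ∧
      trB ρ' = E1 (trB ρ) ∧ trA ρ' = E2 (trA ρ) ∧
      (Matrix.trace (A * ρ)).re ≤ (Matrix.trace (B * ρ')).re

set_option linter.unusedSectionVars false

section Aux

variable {I J : Type*} [Fintype I] [Fintype J]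

lemma conjTranspose_kron (A : Matrix I I ℂ) (B : Matrix J J ℂ) :
    (A ⊗ₖ B)ᴴ = Aᴴ ⊗ₖ Bᴴ := by
  ext ⟨i, j⟩ ⟨k, l⟩
  simp [Matrix.conjTranspose_apply, Matrix.kroneckerMap_apply, star_mul']

lemma trB_kron (σ : Matrix I I ℂ) (τ : Matrix J J ℂ) :
    trB (σ ⊗ₖ τ) = τ.trace • σ := by
  ext i i'
  simp [trB, Matrix.trace, Matrix.diag, Matrix.kroneckerMap_apply, Finset.sum_mul,
    mul_comm, ← Finset.mul_sum]

lemma trA_kron (σ : Matrix I I ℂ) (τ : Matrix J J ℂ) :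
    trA (σ ⊗ₖ τ) = σ.trace • τ := by
  ext j j'
  simp [trA, Matrix.trace, Matrix.diag, Matrix.kroneckerMap_apply, ← Finset.sum_mul]

lemma trB_add (ρ σ : Matrix (I × J) (I × J) ℂ) : trB (ρ + σ) = trB ρ + trB σ := by
  ext i i'
  simp [trB, Finset.sum_add_distrib]

lemma trA_add (ρ σ : Matrix (I × J) (I × J) ℂ) : trA (ρ + σ) = trA ρ + trA σ := by
  ext j j'
  simp [trA, Finset.sum_add_distrib]

lemma trB_sum {n : ℕ} (f : Fin n → Matrix (I × J) (I × J) ℂ) :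
    trB (∑ k, f k) = ∑ k, trB (f k) := by
  ext i i'
  simp only [trB, Matrix.of_apply, Matrix.sum_apply]
  exact Finset.sum_comm

lemma trA_sum {n : ℕ} (f : Fin n → Matrix (I × J) (I × J) ℂ) :
    trA (∑ k, f k) = ∑ k, trA (f k) := by
  ext j j'
  simp only [trA, Matrix.of_apply, Matrix.sum_apply]
  exact Finset.sum_comm

lemma Separable.add {ρ σ : Matrix (I × J) (I × J) ℂ}
    (hρ : Separable ρ) (hσ : Separable σ) : Separable (ρ + σ) := by
  obtain ⟨n, a, b, ha, hb, rfl⟩ := hρ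
  obtain ⟨m, c, d, hc, hd, rfl⟩ := hσ
  refine ⟨n + m, Fin.append a c, Fin.append b d, ?_, ?_, ?_⟩
  · intro k
    refine Fin.addCases (fun i => ?_) (fun i => ?_) k
    · simpa [Fin.append_left] using ha i
    · simpa [Fin.append_right] using hc i
  · intro k
    refine Fin.addCases (fun i => ?_) (fun i => ?_) k
    · simpa [Fin.append_left] using hb i
    · simpa [Fin.append_right] using hd i
  · rw [Fin.sum_univ_add]
    simp [Fin.append_left, Fin.append_right]

lemma Separable.conj [DecidableEq J] {ρ : Matrix (I × J) (I × J) ℂ}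
    (h : Separable ρ) (N : Matrix I I ℂ) :
    Separable ((N ⊗ₖ (1 : Matrix J J ℂ)) * ρ * (N ⊗ₖ (1 : Matrix J J ℂ))ᴴ) := by
  obtain ⟨n, σ, τ, hσ, hτ, rfl⟩ := h
  refine ⟨n, fun k => N * σ k * Nᴴ, τ, fun k => (hσ k).mul_mul_conjTranspose_same N,
    hτ, ?_⟩
  rw [conjTranspose_kron, conjTranspose_one, Matrix.mul_sum, Matrix.sum_mul]
  refine Finset.sum_congr rfl fun k _ => ?_
  rw [← Matrix.mul_kronecker_mul, ← Matrix.mul_kronecker_mul, Matrix.one_mul, Matrix.mul_one]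

end Aux

section Aux2

variable {I J : Type*} [Fintype I] [Fintype J] [DecidableEq I] [DecidableEq J]

lemma trB_conj {ρ : Matrix (I × J) (I × J) ℂ} (h : Separable ρ) (N : Matrix I I ℂ) :
    trB ((N ⊗ₖ (1 : Matrix J J ℂ)) * ρ * (N ⊗ₖ (1 : Matrix J J ℂ))ᴴ) = N * trB ρ * Nᴴ := by
  obtain ⟨n, σ, τ, hσ, hτ, rfl⟩ := h
  rw [conjTranspose_kron, conjTranspose_one, Matrix.mul_sum, Matrix.sum_mul]
  have hk : ∀ k : Fin n,
      (N ⊗ₖ (1 : Matrix J J ℂ)) * (σ k ⊗ₖ τ k) * (Nᴴ ⊗ₖ (1 : Matrix J J ℂ))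
        = (N * σ k * Nᴴ) ⊗ₖ τ k := fun k => by
    rw [← Matrix.mul_kronecker_mul, ← Matrix.mul_kronecker_mul, Matrix.one_mul, Matrix.mul_one]
  simp_rw [hk, trB_sum, trB_kron, Matrix.mul_sum, Matrix.sum_mul]
  refine Finset.sum_congr rfl fun k _ => ?_
  rw [Matrix.mul_smul, Matrix.smul_mul]

lemma trA_conj_pair {ρ : Matrix (I × J) (I × J) ℂ} (h : Separable ρ)
    {Nt Nf : Matrix I I ℂ} (hN : Ntᴴ * Nt + Nfᴴ * Nf = 1) :
    trA ((Nt ⊗ₖ (1 : Matrix J J ℂ)) * ρ * (Nt ⊗ₖ (1 : Matrix J J ℂ))ᴴ) +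
      trA ((Nf ⊗ₖ (1 : Matrix J J ℂ)) * ρ * (Nf ⊗ₖ (1 : Matrix J J ℂ))ᴴ) = trA ρ := by
  obtain ⟨n, σ, τ, hσ, hτ, rfl⟩ := h
  have hk : ∀ (N : Matrix I I ℂ) (k : Fin n),
      (N ⊗ₖ (1 : Matrix J J ℂ)) * (σ k ⊗ₖ τ k) * (Nᴴ ⊗ₖ (1 : Matrix J J ℂ))
        = (N * σ k * Nᴴ) ⊗ₖ τ k := fun N k => by
    rw [← Matrix.mul_kronecker_mul, ← Matrix.mul_kronecker_mul, Matrix.one_mul, Matrix.mul_one]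
  rw [conjTranspose_kron, conjTranspose_kron, conjTranspose_one,
    Matrix.mul_sum, Matrix.sum_mul, Matrix.mul_sum, Matrix.sum_mul]
  simp_rw [hk, trA_sum, trA_kron, ← Finset.sum_add_distrib]
  refine Finset.sum_congr rfl fun k _ => ?_
  rw [← add_smul]
  congr 1
  rw [Matrix.trace_mul_cycle (A := Nt), Matrix.trace_mul_cycle (A := Nf),
    ← Matrix.trace_add, ← Matrix.add_mul, hN,
    Matrix.one_mul]

end Aux2

/-- Rule If1: measuring `X` in the left program and branching. -/
theorem qRHL_if1 {X X' J : Type*} [Fintype X] [Fintype X'] [Fintype J]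
    [DecidableEq X] [DecidableEq X'] [DecidableEq J]
    (Mt Mf : Matrix X X ℂ) (hM : Mtᴴ * Mt + Mfᴴ * Mf = 1)
    (ET EF : Matrix (X × X') (X × X') ℂ → Matrix (X × X') (X × X') ℂ)
    (F : Matrix J J ℂ →ₗ[ℂ] Matrix J J ℂ)
    (AT AF B : Matrix ((X × X') × J) ((X × X') × J) ℂ)
    (hAT : AT.PosSemidef) (hAF : AF.PosSemidef) (hB : B.PosSemidef)
    (hT : qRHL AT ET F B) (hF : qRHL AF EF F B) :
    qRHL
      (((Mt ⊗ₖ (1 : Matrix X' X' ℂ)) ⊗ₖ (1 : Matrix J J ℂ))ᴴ * AT *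
          ((Mt ⊗ₖ (1 : Matrix X' X' ℂ)) ⊗ₖ (1 : Matrix J J ℂ)) +
        ((Mf ⊗ₖ (1 : Matrix X' X' ℂ)) ⊗ₖ (1 : Matrix J J ℂ))ᴴ * AF *
          ((Mf ⊗ₖ (1 : Matrix X' X' ℂ)) ⊗ₖ (1 : Matrix J J ℂ)))
      (fun ρ => ET ((Mt ⊗ₖ (1 : Matrix X' X' ℂ)) * ρ * (Mt ⊗ₖ (1 : Matrix X' X' ℂ))ᴴ) +
        EF ((Mf ⊗ₖ (1 : Matrix X' X' ℂ)) * ρ * (Mf ⊗ₖ (1 : Matrix X' X' ℂ))ᴴ))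
      F B := by
  intro ρ hρ hsep
  have hN : (Mt ⊗ₖ (1 : Matrix X' X' ℂ))ᴴ * (Mt ⊗ₖ (1 : Matrix X' X' ℂ)) +
      (Mf ⊗ₖ (1 : Matrix X' X' ℂ))ᴴ * (Mf ⊗ₖ (1 : Matrix X' X' ℂ)) = 1 := by
    rw [conjTranspose_kron, conjTranspose_kron, conjTranspose_one,
      ← Matrix.mul_kronecker_mul, ← Matrix.mul_kronecker_mul, Matrix.one_mul,
      ← Matrix.add_kronecker, hM, Matrix.one_kronecker_one]
  obtain ⟨ρ't, h1t, h2t, h3t, h4t, h5t⟩ :=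
    hT (((Mt ⊗ₖ (1 : Matrix X' X' ℂ)) ⊗ₖ (1 : Matrix J J ℂ)) * ρ *
        ((Mt ⊗ₖ (1 : Matrix X' X' ℂ)) ⊗ₖ (1 : Matrix J J ℂ))ᴴ)
      (hρ.mul_mul_conjTranspose_same _) (hsep.conj _)
  obtain ⟨ρ'f, h1f, h2f, h3f, h4f, h5f⟩ :=
    hF (((Mf ⊗ₖ (1 : Matrix X' X' ℂ)) ⊗ₖ (1 : Matrix J J ℂ)) * ρ *
        ((Mf ⊗ₖ (1 : Matrix X' X' ℂ)) ⊗ₖ (1 : Matrix J J ℂ))ᴴ)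
      (hρ.mul_mul_conjTranspose_same _) (hsep.conj _)
  refine ⟨ρ't + ρ'f, h1t.add h1f, h2t.add h2f, ?_, ?_, ?_⟩
  · show trB (ρ't + ρ'f) = ET _ + EF _
    rw [trB_add, h3t, h3f, trB_conj hsep, trB_conj hsep]
  · rw [trA_add, h4t, h4f, ← map_add, trA_conj_pair hsep hN]
  · have cyc : ∀ (R A : Matrix ((X × X') × J) ((X × X') × J) ℂ),
        Matrix.trace (Rᴴ * A * R * ρ) = Matrix.trace (A * (R * ρ * Rᴴ)) := fun R A => by
      rw [show Rᴴ * A * R * ρ = Rᴴ * (A * (R * ρ)) from by noncomm_ring,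
        Matrix.trace_mul_comm,
        show A * (R * ρ) * Rᴴ = A * (R * ρ * Rᴴ) from by noncomm_ring]
    rw [Matrix.add_mul, Matrix.trace_add, Complex.add_re, Matrix.mul_add,
      Matrix.trace_add, Complex.add_re, cyc _ AT, cyc _ AF]
    exact add_le_add h5t h5f
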